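/- arXiv:2404.19684 — 2 statements merged into one kernel-verified Lean document; each statement's English description precedes it below -/
import Mathlib

section
/- Let B : V → V be a skew-adjoint linear operator on a 2n-dimensional real inner product space, and suppose B is invertible. Then there exist positive real numbers a₁,…,aₙ and an orthonormal basis e₁,…,e_{2n} of V such that B e_{2k−1} = a_k e_{2k} and B e_{2k} = −a_k e_{2k−1} for k = 1,…,n. -/
/-!
`B ∘ B` is symmetric, so it has a unit eigenvector `u`, and skew-symmetry gives
`⟪B (B u), u⟫ = -‖B u‖²`. With `c = ‖B u‖ > 0` and `w = c⁻¹ • B u` this yields `B u = c • w`,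
`B w = -c • u` and `u ⟂ w`. The plane spanned by `u, w` is `B`-invariant, hence so is its
orthogonal complement, and induction on `n` applies to the restriction of `B` to it.
-/

open Module Submodule

section NormalForm

variable {R M M' : Type*} [Ring R] [AddCommGroup M] [Module R M] [AddCommGroup M'] [Module R M']
  {n : ℕ}

/-- The matrix of `B` in `e` is block diagonal with blocks `!![0, -a k; a k, 0]`. -/
def IsSkewNormalForm (B : M →ₗ[R] M) (a : Fin n → R) (e : Fin (2 * n) → M) : Prop :=
  ∀ k : Fin n, B (e ⟨2 * k, by omega⟩) = a k • e ⟨2 * k + 1, by omega⟩ ∧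
    B (e ⟨2 * k + 1, by omega⟩) = -a k • e ⟨2 * k, by omega⟩

theorem IsSkewNormalForm.vecCons {B : M →ₗ[R] M} {a : Fin n → R} {e : Fin (2 * n) → M}
    (h : IsSkewNormalForm B a e) {c : R} {u w : M} (hu : B u = c • w) (hw : B w = -c • u) :
    IsSkewNormalForm (n := n + 1) B (Fin.cons c a) (Matrix.vecCons u (Matrix.vecCons w e)) := by
  intro k
  induction k using Fin.cases with
  | zero => exact ⟨hu, hw⟩
  -- `2 * (k + 1)` unfolds to `2 * k + 2`, so both `vecCons` drop off definitionally.
  | succ k => exact h k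

theorem IsSkewNormalForm.map {B : M →ₗ[R] M} {B' : M' →ₗ[R] M'} {a : Fin n → R}
    {e : Fin (2 * n) → M} (h : IsSkewNormalForm B a e) (f : M →ₗ[R] M')
    (hf : ∀ x, f (B x) = B' (f x)) : IsSkewNormalForm B' a (f ∘ e) := by
  intro k
  simp only [Function.comp_apply, ← hf, (h k).1, (h k).2, map_smul, and_self]

end NormalForm

namespace LinearMap

variable {𝕜 E : Type*} [RCLike 𝕜] [NormedAddCommGroup E] [InnerProductSpace 𝕜 E]

def IsSkewSymmetric (T : E →ₗ[𝕜] E) : Prop :=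
  ∀ x y, inner 𝕜 (T x) y = -inner 𝕜 x (T y)

namespace IsSkewSymmetric

variable {T : E →ₗ[𝕜] E}

theorem isSymmetric_comp_self (hT : T.IsSkewSymmetric) : (T ∘ₗ T).IsSymmetric := fun x y => by
  rw [comp_apply, comp_apply, hT, hT, neg_neg]

theorem apply_mem_orthogonal (hT : T.IsSkewSymmetric) {K : Submodule 𝕜 E}
    (hK : ∀ x ∈ K, T x ∈ K) {x : E} (hx : x ∈ Kᗮ) : T x ∈ Kᗮ := fun y hy => by
  rw [← neg_eq_zero, ← hT, inner_right_of_mem_orthogonal (hK y hy) hx]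

theorem restrict (hT : T.IsSkewSymmetric) {K : Submodule 𝕜 E} (hK : ∀ x ∈ K, T x ∈ K) :
    (T.restrict hK).IsSkewSymmetric := fun x y =>
  hT x y

section Real

variable {V : Type*} [NormedAddCommGroup V] [InnerProductSpace ℝ V] {B : V →ₗ[ℝ] V}

theorem inner_apply_self (hB : B.IsSkewSymmetric) (x : V) : inner ℝ (B x) x = 0 := by
  have := hB x x
  rw [real_inner_comm (B x) x] at this
  linarith

theorem exists_orthonormal_pair [FiniteDimensional ℝ V] [Nontrivial V] (hB : B.IsSkewSymmetric)
    (hinj : Function.Injective B) :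
    ∃ c : ℝ, 0 < c ∧ ∃ u w : V,
      ‖u‖ = 1 ∧ ‖w‖ = 1 ∧ inner ℝ u w = 0 ∧ B u = c • w ∧ B w = -c • u := by
  have hT := hB.isSymmetric_comp_self
  let i : Fin (finrank ℝ V) := ⟨0, finrank_pos⟩
  set u := hT.eigenvectorBasis rfl i
  set μ := hT.eigenvalues rfl i
  have hu : ‖u‖ = 1 := (hT.eigenvectorBasis rfl).orthonormal.1 i
  have hBBu : B (B u) = μ • u := hT.apply_eigenvectorBasis rfl i
  set c := ‖B u‖
  have hc : 0 < c := norm_pos_iff.mpr fun h =>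
    (hT.eigenvectorBasis rfl).orthonormal.ne_zero i (hinj (h.trans (map_zero B).symm))
  have hμ : μ = -c ^ 2 := by
    have := hB (B u) u
    rw [hBBu, real_inner_smul_left, real_inner_self_eq_norm_sq, real_inner_self_eq_norm_sq,
      hu] at this
    linarith
  refine ⟨c, hc, u, c⁻¹ • B u, hu, ?_, ?_, ?_, ?_⟩
  · rw [norm_smul, norm_inv, norm_norm, inv_mul_cancel₀ hc.ne']
  · rw [real_inner_smul_right, real_inner_comm, hB.inner_apply_self, mul_zero]
  · rw [smul_smul, mul_inv_cancel₀ hc.ne', one_smul]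
  · rw [map_smul, hBBu, hμ, smul_smul]
    congr 1
    field_simp

theorem exists_orthonormal_isSkewNormalForm (n : ℕ) :
    ∀ {V : Type*} [NormedAddCommGroup V] [InnerProductSpace ℝ V] [FiniteDimensional ℝ V]
      {B : V →ₗ[ℝ] V}, B.IsSkewSymmetric → Function.Injective B → finrank ℝ V = 2 * n →
      ∃ a : Fin n → ℝ, (∀ k, 0 < a k) ∧
        ∃ e : Fin (2 * n) → V, Orthonormal ℝ e ∧ IsSkewNormalForm B a e := by
  induction n with
  | zero =>
    intro V _ _ _ B _ _ _
    exact ⟨finZeroElim, finZeroElim, finZeroElim, .of_isEmpty (ι := Fin 0) _, finZeroElim⟩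
  | succ n ih =>
    intro V _ _ _ B hB hinj hrank
    have : Nontrivial V := nontrivial_of_finrank_eq_succ hrank
    obtain ⟨c, hc, u, w, hu, hw, huw, hBu, hBw⟩ := hB.exists_orthonormal_pair hinj
    have hpair : Orthonormal ℝ ![u, w] := by simp [hu, hw, huw]
    set S := span ℝ (Set.range ![u, w])
    have huS : u ∈ S := subset_span ⟨0, rfl⟩
    have hwS : w ∈ S := subset_span ⟨1, rfl⟩
    have hSinv : S ≤ S.comap B := span_le.mpr <| Set.range_subset_iff.mpr fun i => by
      fin_cases i
      · simpa [hBu] using S.smul_mem c hwS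
      · simpa [hBw] using S.smul_mem (-c) huS
    have hWinv : ∀ x ∈ Sᗮ, B x ∈ Sᗮ := fun _ =>
      hB.apply_mem_orthogonal (K := S) fun _ hx => hSinv hx
    have hWrank : finrank ℝ Sᗮ = 2 * n := by
      have := S.finrank_add_finrank_orthogonal
      rw [finrank_span_eq_card hpair.linearIndependent, Fintype.card_fin, hrank] at this
      omega
    obtain ⟨a, ha, e, he, hform⟩ := ih (hB.restrict hWinv)
      (fun x y hxy => Subtype.ext (hinj (congrArg Subtype.val hxy))) hWrank
    refine ⟨Fin.cons c a, Fin.cases hc ha, Matrix.vecCons u (Matrix.vecCons w (Sᗮ.subtype ∘ e)),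
      ?_, (hform.map Sᗮ.subtype fun _ => rfl).vecCons hBu hBw⟩
    have hperp : ∀ {x}, x ∈ S → ∀ i, inner ℝ x ((e i : Sᗮ) : V) = 0 := fun hx i =>
      inner_right_of_mem_orthogonal hx (e i).2
    simp only [orthonormal_vecCons_iff, Fin.forall_fin_succ]
    exact ⟨hu, ⟨huw, hperp huS⟩, hw, hperp hwS, he.comp_linearIsometry Sᗮ.subtypeₗᵢ⟩

end Real

end IsSkewSymmetric

end LinearMap

/-- A skew-adjoint invertible operator `B` on a `2n`-dimensional real inner product space admits
positive numbers `a₁,…,aₙ` and an orthonormal basis `e₁,…,e_{2n}` with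
`B e_{2k-1} = a_k e_{2k}` and `B e_{2k} = -a_k e_{2k-1}`. -/
theorem stmt_5 {V : Type*} [NormedAddCommGroup V] [InnerProductSpace ℝ V]
    [FiniteDimensional ℝ V] (n : ℕ) (hrank : Module.finrank ℝ V = 2 * n)
    (B : V →ₗ[ℝ] V)
    (hB : ∀ u v : V, (inner ℝ (B u) v : ℝ) = -(inner ℝ u (B v) : ℝ))
    (hBbij : Function.Bijective B) :
    ∃ a : Fin n → ℝ, (∀ k, 0 < a k) ∧
      ∃ e : OrthonormalBasis (Fin (2 * n)) ℝ V,
        ∀ k : Fin n,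
          B (e ⟨2 * (k : ℕ), by have := k.isLt; omega⟩)
              = a k • e ⟨2 * (k : ℕ) + 1, by have := k.isLt; omega⟩ ∧
          B (e ⟨2 * (k : ℕ) + 1, by have := k.isLt; omega⟩)
              = -(a k) • e ⟨2 * (k : ℕ), by have := k.isLt; omega⟩ := by
  obtain ⟨a, ha, e, he, hform⟩ :=
    LinearMap.IsSkewSymmetric.exists_orthonormal_isSkewNormalForm n hB hBbij.injective hrank
  have hspan : ⊤ ≤ span ℝ (Set.range e) :=
    (he.linearIndependent.span_eq_top_of_card_eq_finrank' (by simp [hrank])).ge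
  exact ⟨a, ha, .mk he hspan, by rwa [OrthonormalBasis.coe_mk]⟩
end

section
/- Let H be self-adjoint, χ bounded self-adjoint with χD(H) ⊆ D(H), and suppose ‖[H,χ]uₙ‖ ≤ (C/m)(‖(H−λ)uₙ‖ + ‖uₙ‖) for an orthonormal sequence (uₙ) with ‖(H−λ)uₙ‖ → 0, where χ = χ_m depends on a parameter m. If moreover ‖(H−λ)v‖ ≥ δ‖v‖ for all v in the range of (1−χ_m) intersected with D(H), then for every ε > 0 there exist m and N such that ‖(1−χ_m)uₙ‖ < ε for all n > N. -/
/-!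
Write `A = H - λ`. Up to the commutator, `A` commutes with `1 - χ`:
`A (1 - χ) u = (1 - χ) A u - [H, χ] u`. The lower bound for `A` on the range of `1 - χ_m` then gives
`δ ‖(1 - χ_m) uₙ‖ ≤ 2 ‖A uₙ‖ + (C/m) (‖A uₙ‖ + 1)`, whose right side tends to `C/m` as `n → ∞`;
this limit is below `δ ε` as soon as `m > C / (δ ε)`.
-/

open Filter Topology

namespace ContinuousLinearMap

variable {𝕜 E : Type*} [NormedField 𝕜] [SeminormedAddCommGroup E] [NormedSpace 𝕜 E]

theorem apply_one_sub_sub_smul_eq (H χ : E →L[𝕜] E) (c : 𝕜) (w : E) :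
    H (w - χ w) - c • (w - χ w) =
      ((H w - c • w) - χ (H w - c • w)) - (H (χ w) - χ (H w)) := by
  simp only [map_sub, map_smul, smul_sub]
  abel

theorem norm_apply_one_sub_sub_smul_le (H χ : E →L[𝕜] E) (hχ : ∀ v, ‖χ v‖ ≤ ‖v‖)
    (c : 𝕜) (w : E) :
    ‖H (w - χ w) - c • (w - χ w)‖ ≤ 2 * ‖H w - c • w‖ + ‖H (χ w) - χ (H w)‖ := by
  rw [apply_one_sub_sub_smul_eq]
  refine (norm_sub_le _ _).trans (add_le_add_left ?_ _)
  linarith [norm_sub_le (H w - c • w) (χ (H w - c • w)), hχ (H w - c • w)]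

end ContinuousLinearMap

theorem stmt_18_general {E : Type*} [NormedAddCommGroup E] [InnerProductSpace ℂ E]
    (H : E →L[ℂ] E) (lam δ C : ℝ) (hδ : 0 < δ)
    (u : ℕ → E) (hu : Orthonormal ℂ u)
    (hweyl : Tendsto (fun n => ‖H (u n) - (lam : ℂ) • u n‖) atTop (𝓝 0))
    (χ : ℕ → E →L[ℂ] E)
    (hχcontr : ∀ m (v : E), ‖χ m v‖ ≤ ‖v‖)
    (hcomm : ∀ m : ℕ, 0 < m → ∀ n : ℕ,
      ‖H (χ m (u n)) - χ m (H (u n))‖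
        ≤ (C / m) * (‖H (u n) - (lam : ℂ) • u n‖ + ‖u n‖))
    (hlow : ∀ m : ℕ, ∀ w : E,
      δ * ‖w - χ m w‖ ≤ ‖H (w - χ m w) - (lam : ℂ) • (w - χ m w)‖) :
    ∀ ε : ℝ, 0 < ε → ∃ m N : ℕ, ∀ n > N, ‖u n - χ m (u n)‖ < ε := by
  intro ε hε
  set m : ℕ := ⌊C / (δ * ε)⌋₊ + 1
  have hm : 0 < m := Nat.succ_pos _
  have hCm : C / m < δ * ε := by
    rw [div_lt_iff₀ (by exact_mod_cast hm), mul_comm, ← div_lt_iff₀ (mul_pos hδ hε)]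
    exact_mod_cast Nat.lt_floor_add_one _
  set a : ℕ → ℝ := fun n => ‖H (u n) - (lam : ℂ) • u n‖
  have hbound (n : ℕ) : δ * ‖u n - χ m (u n)‖ ≤ 2 * a n + C / m * (a n + 1) :=
    calc δ * ‖u n - χ m (u n)‖
        ≤ ‖H (u n - χ m (u n)) - (lam : ℂ) • (u n - χ m (u n))‖ := hlow m (u n)
      _ ≤ 2 * a n + ‖H (χ m (u n)) - χ m (H (u n))‖ :=
          H.norm_apply_one_sub_sub_smul_le (χ m) (hχcontr m) _ _
      _ ≤ 2 * a n + C / m * (a n + 1) := by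
          linarith [hu.1 n ▸ hcomm m hm n]
  have hlim : Tendsto (fun n => 2 * a n + C / m * (a n + 1)) atTop (𝓝 (C / m)) := by
    simpa using (hweyl.const_mul 2).add ((hweyl.add_const 1).const_mul (C / m))
  obtain ⟨N, hN⟩ := eventually_atTop.mp (hlim.eventually_lt_const hCm)
  exact ⟨m, N, fun n hn => lt_of_mul_lt_mul_left ((hbound n).trans_lt (hN n hn.le)) hδ.le⟩

/-- If `(uₙ)` is an orthonormal Weyl sequence for `λ`, the cutoffs `χ_m` are self-adjoint
contractions with commutator bound `‖[H,χ_m]uₙ‖ ≤ (C/m)(‖(H−λ)uₙ‖ + ‖uₙ‖)`, and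
`‖(H−λ)v‖ ≥ δ‖v‖` for every `v` in the range of `1−χ_m`, then for every `ε > 0` there exist
`m` and `N` with `‖(1−χ_m)uₙ‖ < ε` for all `n > N`. -/
theorem stmt_18 {E : Type*} [NormedAddCommGroup E] [InnerProductSpace ℂ E] [CompleteSpace E]
    (H : E →L[ℂ] E) (hH : IsSelfAdjoint H) (lam δ C : ℝ) (hδ : 0 < δ) (hC : 0 < C)
    (u : ℕ → E) (hu : Orthonormal ℂ u)
    (hweyl : Tendsto (fun n => ‖H (u n) - (lam : ℂ) • u n‖) atTop (𝓝 0))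
    (χ : ℕ → E →L[ℂ] E)
    (hχsa : ∀ m, IsSelfAdjoint (χ m))
    (hχcontr : ∀ m (v : E), ‖χ m v‖ ≤ ‖v‖)
    (hcomm : ∀ m : ℕ, 0 < m → ∀ n : ℕ,
      ‖H (χ m (u n)) - χ m (H (u n))‖
        ≤ (C / m) * (‖H (u n) - (lam : ℂ) • u n‖ + ‖u n‖))
    (hlow : ∀ m : ℕ, ∀ w : E,
      δ * ‖w - χ m w‖ ≤ ‖H (w - χ m w) - (lam : ℂ) • (w - χ m w)‖) :
    ∀ ε : ℝ, 0 < ε → ∃ m N : ℕ, ∀ n > N, ‖u n - χ m (u n)‖ < ε :=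
  stmt_18_general H lam δ C hδ u hu hweyl χ hχcontr hcomm hlow
end
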